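/- arXiv:1903.09125 — 4 statements merged into one kernel-verified Lean document; each statement's English description precedes it below -/
import Mathlib

section
/- Let Q be an n×n real symmetric positive definite matrix with all entries strictly positive, where n ≥ 2. Then for any nonempty proper subset S of the index set, there exist indices i ∈ S and j ∉ S such that the (i,j) entry of Q⁻¹ is strictly negative. -/
/-!
Suppose `Q⁻¹` is nonnegative on `S × Sᶜ`. For `k ∉ S` the column `v = Q eₖ` is positive and
`Q⁻¹ v = eₖ` vanishes on `S`. For a positive definite `A` that is nonnegative on `S × Sᶜ`, a
vector `v ≥ 0` with `A v` vanishing on `S` must itself vanish on `S`; with `A = Q⁻¹` this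
contradicts `Q > 0`.
-/

open Matrix

namespace Matrix.PosDef

variable {ι R : Type*} [Fintype ι] [Field R] [LinearOrder R] [IsStrictOrderedRing R] [StarRing R]
  [TrivialStar R]

/-- The part `x` of `v` off `S` satisfies `(A x)ₖ = -(A (v - x))ₖ ≤ 0` off `S`, so `xᵀ A x ≤ 0`. -/
theorem eq_zero_off_of_mulVec_eq_zero_off {A : Matrix ι ι R} (hA : A.PosDef) {S : Finset ι}
    (hAS : ∀ i ∉ S, ∀ j ∈ S, 0 ≤ A i j) {v : ι → R} (hv : 0 ≤ v)
    (hAv : ∀ k ∉ S, (A *ᵥ v) k = 0) : ∀ k ∉ S, v k = 0 := by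
  classical
  set x : ι → R := fun j => if j ∈ S then 0 else v j
  set y : ι → R := fun j => if j ∈ S then v j else 0
  have hxy : v = x + y := by
    ext j
    by_cases hj : j ∈ S <;> simp [x, y, hj]
  have hAx : ∀ k ∉ S, (A *ᵥ x) k ≤ 0 := by
    intro k hk
    have hAy : 0 ≤ (A *ᵥ y) k :=
      Finset.sum_nonneg fun j _ => by
        by_cases hj : j ∈ S
        · simpa [y, hj] using mul_nonneg (hAS k hk j hj) (hv j)
        · simp [y, hj]
    have hAvk := hAv k hk
    rw [hxy, mulVec_add, Pi.add_apply] at hAvk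
    linarith
  have hquad : x ⬝ᵥ A *ᵥ x ≤ 0 :=
    Finset.sum_nonpos fun k _ => by
      by_cases hk : k ∈ S
      · simp [x, hk]
      · simpa [x, hk] using mul_nonpos_of_nonneg_of_nonpos (hv k) (hAx k hk)
  have hx : x = 0 := by
    by_contra hx
    have hpos := hA.dotProduct_mulVec_pos hx
    rw [star_trivial] at hpos
    exact hquad.not_gt hpos
  intro k hk
  simpa [x, hk] using congrFun hx k

end Matrix.PosDef

theorem stmt_4_general {n : ℕ} (Q : Matrix (Fin n) (Fin n) ℝ)
    (hpd : Q.PosDef) (hpos : ∀ i j, 0 < Q i j)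
    (S : Finset (Fin n)) (hS : S.Nonempty) (hS' : S ≠ Finset.univ) :
    ∃ i ∈ S, ∃ j ∉ S, Q⁻¹ i j < 0 := by
  by_contra! hinv
  obtain ⟨i, hi⟩ := hS
  obtain ⟨k, hk⟩ : ∃ k, k ∉ S := by simpa [Finset.eq_univ_iff_forall] using hS'
  have hQinvQ : Q⁻¹ *ᵥ Q.col k = Pi.single k 1 := by
    rw [← mulVec_single_one, mulVec_mulVec,
      nonsing_inv_mul _ ((isUnit_iff_isUnit_det Q).mp hpd.isUnit), one_mulVec]
  have hcol : ∀ j ∉ Sᶜ, Q.col k j = 0 :=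
    hpd.inv.eq_zero_off_of_mulVec_eq_zero_off (by simpa using hinv) (fun j => (hpos j k).le)
      fun j hj => by
        rw [hQinvQ, Pi.single_eq_of_ne (ne_of_mem_of_not_mem (Finset.notMem_compl.mp hj) hk)]
  exact (hpos i k).ne' (hcol i (Finset.notMem_compl.mpr hi))

/-- Fiedler's theorem / connectedness of the negative-inverse graph: for a symmetric
positive definite entrywise strictly positive matrix, every nontrivial index split is
crossed by a strictly negative entry of the inverse. -/
theorem stmt_4 {n : ℕ} (hn : 2 ≤ n) (Q : Matrix (Fin n) (Fin n) ℝ)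
    (hsymm : Qᵀ = Q) (hpd : Q.PosDef) (hpos : ∀ i j, 0 < Q i j)
    (S : Finset (Fin n)) (hS : S.Nonempty) (hS' : S ≠ Finset.univ) :
    ∃ i ∈ S, ∃ j ∉ S, Q⁻¹ i j < 0 :=
  stmt_4_general Q hpd hpos S hS hS'
end

section
/- Let Q be a 2×2 real symmetric positive definite entrywise nonnegative matrix with invertible Q, and let R = Q⁻¹. Then for every vector y ∈ ℝ², |y|ᵀ R |y| ≤ yᵀ R y, where |y| is the entrywise absolute value. (I.e., goals in the positive orthant require no more energy than their sign-flipped versions.) -/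
/-!
Writing `R = Q⁻¹`, the cross terms `R i j * y i * y j` with `i ≠ j` are the only ones that change
when `y` is replaced by `|y|`. For a 2×2 matrix, `Q⁻¹ = (det Q)⁻¹ • !![Q 1 1, -Q 0 1; -Q 1 0, Q 0 0]`,
so `det Q > 0` and nonnegative off-diagonal entries of `Q` make the off-diagonal entries of `R` nonpositive, and replacing `y i * y j`
by the larger `|y i| * |y j|` can then only decrease the quadratic form.
-/

open Matrix

theorem Matrix.abs_dotProduct_mulVec_abs_le {n K : Type*} [Fintype n] [CommRing K] [LinearOrder K]
    [IsStrictOrderedRing K] (R : Matrix n n K) (hR : ∀ i j, i ≠ j → R i j ≤ 0) (y : n → K) :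
    (fun i => |y i|) ⬝ᵥ R *ᵥ (fun i => |y i|) ≤ y ⬝ᵥ R *ᵥ y := by
  rw [dot_mulVec_eq_sum_sum, dot_mulVec_eq_sum_sum]
  refine Finset.sum_le_sum fun j _ => Finset.sum_le_sum fun i _ => ?_
  rw [mul_comm (|y i|), mul_comm (y i), mul_assoc, mul_assoc, ← abs_mul]
  rcases eq_or_ne i j with rfl | hij
  · rw [abs_mul_self]
  · exact mul_le_mul_of_nonpos_left (le_abs_self _) (hR i j hij)

theorem Matrix.inv_apply_nonpos_of_fin_two {K : Type*} [Field K] [LinearOrder K]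
    [IsStrictOrderedRing K] (Q : Matrix (Fin 2) (Fin 2) K) (hdet : 0 < Q.det)
    (hQ : ∀ i j, i ≠ j → 0 ≤ Q i j) : ∀ i j, i ≠ j → Q⁻¹ i j ≤ 0 := by
  have hdet_inv : 0 ≤ Q.det⁻¹ := (inv_pos.mpr hdet).le
  intro i j hij
  rw [inv_def, adjugate_fin_two]
  fin_cases i <;> fin_cases j <;> simp at hij ⊢ <;> exact mul_nonneg hdet_inv (hQ _ _ (by decide))

theorem stmt_8_general (Q : Matrix (Fin 2) (Fin 2) ℝ)
    (hpd : Q.PosDef) (hnn : ∀ i j, 0 ≤ Q i j)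
    (y : Fin 2 → ℝ) :
    (fun i => |y i|) ⬝ᵥ Q⁻¹.mulVec (fun i => |y i|) ≤ y ⬝ᵥ Q⁻¹.mulVec y :=
  Q⁻¹.abs_dotProduct_mulVec_abs_le (Q.inv_apply_nonpos_of_fin_two hpd.det_pos fun i j _ => hnn i j) y

/-- For a 2×2 symmetric positive definite entrywise-nonnegative matrix Q with R = Q⁻¹,
goals in the positive orthant require no more energy: |y|ᵀR|y| ≤ yᵀRy. -/
theorem stmt_8 (Q : Matrix (Fin 2) (Fin 2) ℝ)
    (hsymm : Qᵀ = Q) (hpd : Q.PosDef) (hnn : ∀ i j, 0 ≤ Q i j)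
    (y : Fin 2 → ℝ) :
    (fun i => |y i|) ⬝ᵥ Q⁻¹.mulVec (fun i => |y i|) ≤ y ⬝ᵥ Q⁻¹.mulVec y :=
  stmt_8_general Q hpd hnn y
end

section
/- Let Q be an entrywise strictly positive symmetric n×n real matrix (n ≥ 1). Then Q has a real eigenvalue λ equal to its spectral radius, with algebraic multiplicity one, and an associated eigenvector that is entrywise strictly positive; moreover λ strictly exceeds the absolute value of every other eigenvalue. -/
/-!
The Rayleigh quotient `x ⬝ᵥ Q *ᵥ x` attains its maximum on the unit sphere at some `u`, and,
`Q` being nonnegative, also at `|u|`; so `|u|` is an eigenvector, and positivity of `Q` makes it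
strictly positive. By symmetry this eigenvector `v` is also a left eigenvector, so pairing
`|μ| |w| ≤ Q |w|` with `v` gives `|μ| ≤ λ`. When `μ ≠ λ` we get `v ⬝ᵥ w = 0`, so `w` has entries
of both signs and the triangle inequality becomes strict, whence `|μ| < λ`. Finally, for a
`λ`-eigenvector `w`, subtracting from `w` the largest multiple of `v` below it leaves a
nonnegative eigenvector with a zero entry, which must vanish.
-/

open Matrix

variable {ι : Type*} [Fintype ι]

lemma dotProduct_pos_of_pos_of_nonneg {v x : ι → ℝ} (hv : ∀ i, 0 < v i) (hx : 0 ≤ x)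
    (hx0 : x ≠ 0) : 0 < v ⬝ᵥ x := by
  obtain ⟨j, hj⟩ := Function.ne_iff.1 hx0
  exact Finset.sum_pos' (fun i _ => mul_nonneg (hv i).le (hx i))
    ⟨j, Finset.mem_univ j, mul_pos (hv j) ((hx j).lt_of_ne' hj)⟩

lemma exists_pos_of_dotProduct_eq_zero {v w : ι → ℝ} (hv : ∀ i, 0 < v i) (hvw : v ⬝ᵥ w = 0)
    (hw : w ≠ 0) : ∃ j, 0 < w j := by
  by_contra! h
  have := dotProduct_pos_of_pos_of_nonneg hv (x := -w) (fun i => neg_nonneg.2 (h i))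
    (neg_ne_zero.2 hw)
  rw [dotProduct_neg, hvw, neg_zero] at this
  exact this.false

namespace Matrix

section Positivity

variable {Q : Matrix ι ι ℝ}

lemma mulVec_pos_of_pos (hQ : ∀ i j, 0 < Q i j) {x : ι → ℝ} (hx : 0 ≤ x) (hx0 : x ≠ 0)
    (i : ι) : 0 < (Q *ᵥ x) i :=
  dotProduct_pos_of_pos_of_nonneg (hQ i) hx hx0

lemma pos_of_mulVec_eq_smul (hQ : ∀ i j, 0 < Q i j) {x : ι → ℝ} {lam : ℝ} (hx : 0 ≤ x)
    (hx0 : x ≠ 0) (hQx : Q *ᵥ x = lam • x) (i : ι) : 0 < x i := by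
  have h := mulVec_pos_of_pos hQ hx hx0 i
  rw [hQx] at h
  exact (hx i).lt_of_ne fun hxi => by simp [← hxi] at h

lemma abs_mulVec_le_mulVec_abs (hQ : ∀ i j, 0 ≤ Q i j) (w : ι → ℝ) : |Q *ᵥ w| ≤ Q *ᵥ |w| := by
  intro i
  simp only [Pi.abs_apply, mulVec, dotProduct]
  calc |∑ j, Q i j * w j| ≤ ∑ j, |Q i j * w j| := Finset.abs_sum_le_sum_abs _ _
    _ = ∑ j, Q i j * |w j| := by simp_rw [abs_mul, abs_of_nonneg (hQ i _)]

lemma abs_mulVec_lt_mulVec_abs (hQ : ∀ i j, 0 < Q i j) {w : ι → ℝ} {j k : ι} (hj : 0 < w j)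
    (hk : w k < 0) (i : ι) : |(Q *ᵥ w) i| < (Q *ᵥ |w|) i := by
  have hplus := mulVec_pos_of_pos hQ (x := |w| + w)
    (fun l => neg_le_iff_add_nonneg'.1 (neg_abs_le (w l)))
    (Function.ne_iff.2 ⟨j, (show 0 < (|w| + w) j by simpa [abs_of_pos hj]).ne'⟩) i
  have hminus := mulVec_pos_of_pos hQ (x := |w| - w) (fun l => by simpa using le_abs_self (w l))
    (Function.ne_iff.2 ⟨k, (show 0 < (|w| - w) k by simp [abs_of_neg hk]; linarith).ne'⟩) i
  rw [mulVec_add, Pi.add_apply] at hplus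
  rw [mulVec_sub, Pi.sub_apply] at hminus
  exact abs_lt.2 ⟨by linarith, by linarith⟩

end Positivity

section LeftEigenvector

variable {Q : Matrix ι ι ℝ} {v x : ι → ℝ} {c lam : ℝ}

lemma dotProduct_mulVec_of_vecMul_eq_smul (hvQ : v ᵥ* Q = lam • v) (x : ι → ℝ) :
    v ⬝ᵥ (Q *ᵥ x) = lam * (v ⬝ᵥ x) := by
  rw [dotProduct_mulVec, hvQ, smul_dotProduct, smul_eq_mul]

lemma le_of_smul_le_mulVec (hv : ∀ i, 0 < v i) (hvQ : v ᵥ* Q = lam • v) (hx : 0 ≤ x)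
    (hx0 : x ≠ 0) (h : c • x ≤ Q *ᵥ x) : c ≤ lam := by
  have key : c * (v ⬝ᵥ x) ≤ lam * (v ⬝ᵥ x) := by
    rw [← dotProduct_mulVec_of_vecMul_eq_smul hvQ, ← smul_eq_mul, ← dotProduct_smul]
    exact dotProduct_le_dotProduct_of_nonneg_left h fun i => (hv i).le
  exact le_of_mul_le_mul_right key (dotProduct_pos_of_pos_of_nonneg hv hx hx0)

lemma lt_of_forall_mul_lt_mulVec [Nonempty ι] (hv : ∀ i, 0 < v i) (hvQ : v ᵥ* Q = lam • v)
    (hx : 0 ≤ x) (h : ∀ i, c * x i < (Q *ᵥ x) i) : c < lam := by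
  have key : c * (v ⬝ᵥ x) < lam * (v ⬝ᵥ x) := by
    rw [← dotProduct_mulVec_of_vecMul_eq_smul hvQ, ← smul_eq_mul, ← dotProduct_smul]
    exact Finset.sum_lt_sum_of_nonempty Finset.univ_nonempty fun i _ =>
      mul_lt_mul_of_pos_left (h i) (hv i)
  exact lt_of_mul_lt_mul_right key (dotProduct_nonneg_of_nonneg (fun i => (hv i).le) hx)

variable {μ : ℝ} {w : ι → ℝ}

theorem abs_le_of_mulVec_eq_smul (hQ : ∀ i j, 0 ≤ Q i j) (hv : ∀ i, 0 < v i)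
    (hvQ : v ᵥ* Q = lam • v) (hw : w ≠ 0) (hQw : Q *ᵥ w = μ • w) : |μ| ≤ lam := by
  refine le_of_smul_le_mulVec hv hvQ (abs_nonneg w) (by simpa using hw) fun i => ?_
  simpa [abs_mul, hQw] using abs_mulVec_le_mulVec_abs hQ w i

theorem abs_lt_of_mulVec_eq_smul (hQ : ∀ i j, 0 < Q i j) (hv : ∀ i, 0 < v i)
    (hvQ : v ᵥ* Q = lam • v) (hw : w ≠ 0) (hQw : Q *ᵥ w = μ • w) (hμ : μ ≠ lam) :
    |μ| < lam := by
  have hvw : v ⬝ᵥ w = 0 := by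
    have h : lam * (v ⬝ᵥ w) = μ * (v ⬝ᵥ w) := by
      rw [← dotProduct_mulVec_of_vecMul_eq_smul hvQ, hQw, dotProduct_smul, smul_eq_mul]
    exact (mul_eq_mul_right_iff.1 h).resolve_left hμ.symm
  obtain ⟨j, hj⟩ := exists_pos_of_dotProduct_eq_zero hv hvw hw
  obtain ⟨k, hk⟩ := exists_pos_of_dotProduct_eq_zero hv (by rw [dotProduct_neg, hvw, neg_zero])
    (neg_ne_zero.2 hw)
  have : Nonempty ι := ⟨j⟩
  refine lt_of_forall_mul_lt_mulVec hv hvQ (abs_nonneg w) fun i => ?_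
  simpa [abs_mul, hQw] using abs_mulVec_lt_mulVec_abs hQ hj (neg_pos.1 hk) i

end LeftEigenvector

theorem exists_eq_smul_of_mulVec_eq_smul [Nonempty ι] {Q : Matrix ι ι ℝ}
    (hQ : ∀ i j, 0 < Q i j) {v w : ι → ℝ} {lam : ℝ} (hv : ∀ i, 0 < v i)
    (hQv : Q *ᵥ v = lam • v) (hQw : Q *ᵥ w = lam • w) : ∃ c : ℝ, w = c • v := by
  obtain ⟨i₀, -, hmin⟩ := Finset.univ.exists_min_image (fun i => w i / v i) Finset.univ_nonempty
  set c := w i₀ / v i₀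
  refine ⟨c, sub_eq_zero.1 ?_⟩
  by_contra hz
  have hz_nonneg : 0 ≤ w - c • v := fun i => by
    simpa [sub_nonneg, mul_comm c] using (le_div_iff₀ (hv i)).1 (hmin i (Finset.mem_univ i))
  have hz₀ : (w - c • v) i₀ = 0 := by simp [c, div_mul_cancel₀ _ (hv i₀).ne']
  have hQz : Q *ᵥ (w - c • v) = lam • (w - c • v) := by
    rw [mulVec_sub, mulVec_smul, hQv, hQw, smul_sub, smul_comm]
  have h := mulVec_pos_of_pos hQ hz_nonneg hz i₀
  rw [hQz, Pi.smul_apply, hz₀, smul_zero] at h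
  exact h.false

section Rayleigh

variable {Q : Matrix ι ι ℝ}

lemma dotProduct_mulVec_le_abs (hQ : ∀ i j, 0 ≤ Q i j) (x : ι → ℝ) :
    x ⬝ᵥ (Q *ᵥ x) ≤ |x| ⬝ᵥ (Q *ᵥ |x|) :=
  calc x ⬝ᵥ (Q *ᵥ x) ≤ |x ⬝ᵥ (Q *ᵥ x)| := le_abs_self _
    _ ≤ |x| ⬝ᵥ (|Q *ᵥ x|) := by
      simpa only [dotProduct, Pi.abs_apply, abs_mul] using
        Finset.abs_sum_le_sum_abs (fun i => x i * (Q *ᵥ x) i) Finset.univ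
    _ ≤ |x| ⬝ᵥ (Q *ᵥ |x|) :=
      dotProduct_le_dotProduct_of_nonneg_left (abs_mulVec_le_mulVec_abs hQ x) (abs_nonneg x)

lemma reApplyInnerSelf_toEuclideanCLM [DecidableEq ι] (x : EuclideanSpace ℝ ι) :
    (toEuclideanCLM (𝕜 := ℝ) Q).reApplyInnerSelf x = x.ofLp ⬝ᵥ (Q *ᵥ x.ofLp) := by
  rw [ContinuousLinearMap.reApplyInnerSelf_apply, RCLike.re_to_real, real_inner_comm,
    inner_toEuclideanCLM]

theorem exists_nonneg_eigenvector_of_isSymm [Nonempty ι] (hQ : Q.IsSymm)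
    (hnn : ∀ i j, 0 ≤ Q i j) : ∃ (lam : ℝ) (x : ι → ℝ), 0 ≤ x ∧ x ≠ 0 ∧ Q *ᵥ x = lam • x := by
  classical
  set T := toEuclideanCLM (𝕜 := ℝ) Q
  have hT : IsSelfAdjoint T := IsSelfAdjoint.map
    (show IsSelfAdjoint Q from (conjTranspose_eq_transpose_of_trivial Q).trans hQ.eq) _
  obtain ⟨u, hu, hmax⟩ := (isCompact_sphere (0 : EuclideanSpace ℝ ι) 1).exists_isMaxOn
    (NormedSpace.sphere_nonempty.2 zero_le_one) T.reApplyInnerSelf_continuous.continuousOn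
  set a : EuclideanSpace ℝ ι := WithLp.toLp 2 |u.ofLp|
  have hnorm : ‖a‖ = 1 := by
    rw [← mem_sphere_zero_iff_norm.1 hu]
    simp [a, EuclideanSpace.norm_eq]
  have hmax' : IsMaxOn T.reApplyInnerSelf (Metric.sphere 0 ‖a‖) a := by
    rw [hnorm]
    intro y hy
    calc T.reApplyInnerSelf y ≤ T.reApplyInnerSelf u := hmax hy
      _ ≤ T.reApplyInnerSelf a := by
        simpa [T, a, reApplyInnerSelf_toEuclideanCLM] using dotProduct_mulVec_le_abs hnn u.ofLp
  have hTa := hT.eq_smul_self_of_isLocalExtrOn_real (Or.inr hmax'.localize)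
  refine ⟨_, |u.ofLp|, abs_nonneg _, fun h => ?_, by simpa [a, T] using congrArg WithLp.ofLp hTa⟩
  simp [a, h] at hnorm

end Rayleigh

end Matrix

/-- Perron–Frobenius for symmetric entrywise strictly positive matrices: there is a real
eigenvalue lam equal to the spectral radius, of multiplicity one, with an entrywise
strictly positive eigenvector, strictly dominating all other eigenvalues in modulus. -/
theorem stmt_10 {n : ℕ} (hn : 1 ≤ n) (Q : Matrix (Fin n) (Fin n) ℝ)
    (hsymm : Qᵀ = Q) (hpos : ∀ i j, 0 < Q i j) :
    ∃ lam : ℝ, ∃ v : Fin n → ℝ,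
      (∀ i, 0 < v i) ∧ Q.mulVec v = lam • v ∧
      (∀ μ : ℝ, (∃ w : Fin n → ℝ, w ≠ 0 ∧ Q.mulVec w = μ • w) → |μ| ≤ lam) ∧
      (∀ μ : ℝ, (∃ w : Fin n → ℝ, w ≠ 0 ∧ Q.mulVec w = μ • w) → μ ≠ lam → |μ| < lam) ∧
      (∀ w : Fin n → ℝ, Q.mulVec w = lam • w → ∃ c : ℝ, w = c • v) := by
  have : Nonempty (Fin n) := ⟨⟨0, hn⟩⟩
  have hnn : ∀ i j, 0 ≤ Q i j := fun i j => (hpos i j).le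
  obtain ⟨lam, x, hx, hx0, hQx⟩ := exists_nonneg_eigenvector_of_isSymm hsymm hnn
  have hv := pos_of_mulVec_eq_smul hpos hx hx0 hQx
  have hxQ : x ᵥ* Q = lam • x := by rw [← hQx, ← vecMul_transpose, hsymm]
  refine ⟨lam, x, hv, hQx, ?_, ?_, fun w hQw => exists_eq_smul_of_mulVec_eq_smul hpos hv hQx hQw⟩
  · rintro μ ⟨w, hw, hQw⟩
    exact abs_le_of_mulVec_eq_smul hnn hv hxQ hw hQw
  · rintro μ ⟨w, hw, hQw⟩ hμ
    exact abs_lt_of_mulVec_eq_smul hpos hv hxQ hw hQw hμ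
end

section
/- Let W be a symmetric positive semidefinite n×n real matrix (n ≥ 2) whose eigenvector for its largest eigenvalue is entrywise strictly positive and the largest eigenvalue is simple. Let Q be a proper principal submatrix of W. Then λ_max(Q) < λ_max(W). -/
/-!
Since every real eigenvalue of `W` is at most `lam`, the matrix `lam • 1 - W` is positive
semidefinite, hence so is its principal submatrix `lam • 1 - Q`; this gives `μ ≤ lam`. If
`μ = lam` with `Q u = μ u`, the zero-extension `w` of `u` has `wᵀ (lam • 1 - W) w = 0`, so
`W w = lam • w` and by simplicity `w` is a multiple of the positive vector `v`. But `w` vanishes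
outside the range of `e`, which is nonempty as `k < n`, forcing `w = 0`.
-/

open Matrix Function

section

variable {m n : Type*}

theorem Function.extend_zero_ne_smul_of_pos {e : m → n} (he : Injective e)
    (hsurj : ¬ Surjective e) {u : m → ℝ} (hu : u ≠ 0) {v : n → ℝ} (hv : ∀ i, 0 < v i) (c : ℝ) :
    extend e u 0 ≠ c • v := by
  intro hw
  obtain ⟨i, hi⟩ := not_forall.mp hsurj
  have hc : c = 0 := by
    have := congrFun hw i
    rw [extend_apply' _ _ _ hi, Pi.smul_apply, smul_eq_mul, Pi.zero_apply] at this
    exact (mul_eq_zero.mp this.symm).resolve_right (hv i).ne'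
  exact hu (funext fun a ↦ by simpa [hc, he.extend_apply] using congrFun hw (e a))

variable [Fintype m] [Fintype n]

theorem Matrix.exists_mulVec_eq_smul_of_mem_spectrum {K : Type*} [Field K] [DecidableEq n]
    {A : Matrix n n K} {μ : K} (hμ : μ ∈ spectrum K A) : ∃ w ≠ 0, A *ᵥ w = μ • w := by
  rw [← spectrum_toLin', ← Module.End.hasEigenvalue_iff_mem_spectrum] at hμ
  obtain ⟨w, hw⟩ := hμ.exists_hasEigenvector
  exact ⟨w, hw.2, by simpa using hw.apply_eq_smul⟩

open scoped MatrixOrder in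
theorem Matrix.IsHermitian.posSemidef_smul_one_sub [DecidableEq n] {A : Matrix n n ℝ}
    (hA : A.IsHermitian) {lam : ℝ} (h : ∀ μ, (∃ w ≠ 0, A *ᵥ w = μ • w) → μ ≤ lam) :
    (lam • 1 - A).PosSemidef := by
  rw [← Algebra.algebraMap_eq_smul_one]
  exact le_algebraMap_of_spectrum_le fun μ hμ ↦ h μ (exists_mulVec_eq_smul_of_mem_spectrum hμ)

theorem Function.Injective.sum_mul_extend_zero {R : Type*} [CommSemiring R] {e : m → n}
    (he : Injective e) (f : n → R) (u : m → R) :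
    ∑ i, f i * extend e u 0 i = ∑ a, f (e a) * u a :=
  (Fintype.sum_of_injective e he _ _ (fun i hi ↦ by simp [extend_apply' _ _ _ (by simpa using hi)])
    fun a ↦ by rw [he.extend_apply]).symm

theorem Matrix.extend_zero_dotProduct_mulVec {R : Type*} [CommSemiring R] (A : Matrix n n R)
    {e : m → n} (he : Injective e) (u : m → R) :
    extend e u 0 ⬝ᵥ A *ᵥ extend e u 0 = u ⬝ᵥ A.submatrix e e *ᵥ u := by
  rw [dotProduct_comm, dotProduct_comm u]
  simp only [dotProduct, mulVec, he.sum_mul_extend_zero, submatrix_apply]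

end

theorem stmt_11_general {n k : ℕ} (W : Matrix (Fin n) (Fin n) ℝ)
    (hsymm : Wᵀ = W)
    (lam : ℝ) (v : Fin n → ℝ) (hv : ∀ i, 0 < v i)
    (hmax : ∀ μ : ℝ, (∃ w : Fin n → ℝ, w ≠ 0 ∧ W.mulVec w = μ • w) → μ ≤ lam)
    (hsimple : ∀ w : Fin n → ℝ, W.mulVec w = lam • w → ∃ c : ℝ, w = c • v)
    (e : Fin k → Fin n) (he : Function.Injective e) (hk : k < n) :
    ∀ μ : ℝ, (∃ u : Fin k → ℝ, u ≠ 0 ∧ (W.submatrix e e).mulVec u = μ • u) → μ < lam := by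
  rintro μ ⟨u, hu, hWu⟩
  have hA : (lam • 1 - W).PosSemidef :=
    (isHermitian_iff_isSymm.mpr hsymm).posSemidef_smul_one_sub hmax
  set w := extend e u 0
  have hsub : (lam • 1 - W).submatrix e e = lam • 1 - W.submatrix e e := by
    rw [← submatrix_one _ he]; rfl
  have hquad : w ⬝ᵥ (lam • 1 - W) *ᵥ w = (lam - μ) * (u ⬝ᵥ u) := by
    rw [extend_zero_dotProduct_mulVec _ he, hsub, sub_mulVec, smul_mulVec, one_mulVec, hWu,
      ← sub_smul, dotProduct_smul, smul_eq_mul]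
  have hnonneg : 0 ≤ (lam - μ) * (u ⬝ᵥ u) := by
    simpa only [star_trivial, hquad] using hA.dotProduct_mulVec_nonneg w
  have huu : 0 < u ⬝ᵥ u :=
    (dotProduct_self_star_nonneg u).lt_of_ne'
      (by simpa only [star_trivial, ne_eq, dotProduct_self_eq_zero])
  refine lt_of_le_of_ne (sub_nonneg.mp (nonneg_of_mul_nonneg_left hnonneg huu)) fun hμ ↦ ?_
  have hAw : (lam • 1 - W) *ᵥ w = 0 := (hA.dotProduct_mulVec_zero_iff w).mp <| by
    rw [star_trivial, hquad, hμ, sub_self, zero_mul]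
  obtain ⟨c, hc⟩ := hsimple w <| by
    rwa [sub_mulVec, smul_mulVec, one_mulVec, sub_eq_zero, eq_comm] at hAw
  have hsurj : ¬ Surjective e := fun hs ↦ (Fintype.card_le_of_surjective e hs).not_gt (by simpa)
  exact extend_zero_ne_smul_of_pos he hsurj hu hv c hc

/-- If the largest eigenvalue lam of a symmetric PSD matrix W is simple with an entrywise
strictly positive eigenvector, then every eigenvalue of any proper principal submatrix of
W is strictly smaller than lam. -/
theorem stmt_11 {n k : ℕ} (hn : 2 ≤ n) (W : Matrix (Fin n) (Fin n) ℝ)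
    (hsymm : Wᵀ = W) (hpsd : W.PosSemidef)
    (lam : ℝ) (v : Fin n → ℝ) (hv : ∀ i, 0 < v i)
    (heig : W.mulVec v = lam • v)
    (hmax : ∀ μ : ℝ, (∃ w : Fin n → ℝ, w ≠ 0 ∧ W.mulVec w = μ • w) → μ ≤ lam)
    (hsimple : ∀ w : Fin n → ℝ, W.mulVec w = lam • w → ∃ c : ℝ, w = c • v)
    (e : Fin k → Fin n) (he : Function.Injective e) (hk : k < n) :
    ∀ μ : ℝ, (∃ u : Fin k → ℝ, u ≠ 0 ∧ (W.submatrix e e).mulVec u = μ • u) → μ < lam :=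
  stmt_11_general W hsymm lam v hv hmax hsimple e he hk
end
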